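/- arXiv:2501.17514 — 3 statements merged into one kernel-verified Lean document; each statement's English description precedes it below -/
import Mathlib

section
/- Let p0, p1 ∈ (0,1) and θ > 0 with θ ≠ 1. Define δ = (1 + (θ-1)(p0+p1))² - 4θ(θ-1)p0p1. Then δ > 0. -/
/-!
With `e = e11`, the quadratic `q e = (θ-1)e² - (1+(θ-1)(p0+p1))e + θp0p1` equals
`-(e11·e00 - θ·e10·e01)`. At `e = 0` it is `θp0p1 > 0`, and at `e = p0` (where `e10 = 0`) it is
`-p0(1-p1) < 0`. A quadratic that takes both signs has positive discriminant.
-/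

theorem discrim_pos_of_sign_change {K : Type*} [CommRing K] [LinearOrder K]
    [IsStrictOrderedRing K] {a b c x y : K} (hx : a * (x * x) + b * x + c < 0)
    (hy : 0 < a * (y * y) + b * y + c) : 0 < discrim a b c := by
  by_contra! hD
  have complete_square (z : K) :
      4 * a * (a * (z * z) + b * z + c) = (2 * a * z + b) ^ 2 - discrim a b c := by
    rw [discrim]; ring
  have ha : a = 0 := by
    nlinarith [complete_square x, complete_square y, sq_nonneg (2 * a * x + b),
      sq_nonneg (2 * a * y + b)]
  have hb : b = 0 := by
    rw [discrim, ha] at hD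
    nlinarith [sq_nonneg b]
  simp only [ha, hb, zero_mul, zero_add] at hx hy
  exact hx.not_gt hy

theorem delta_pos_general (p0 p1 θ : ℝ) (hp0 : p0 ∈ Set.Ioo (0:ℝ) 1) (hp1 : p1 ∈ Set.Ioo (0:ℝ) 1)
    (hθ : 0 < θ) :
    0 < (1 + (θ - 1) * (p0 + p1)) ^ 2 - 4 * θ * (θ - 1) * p0 * p1 := by
  obtain ⟨hp0_pos, -⟩ := hp0
  obtain ⟨hp1_pos, hp1_lt_one⟩ := hp1
  have hD : discrim (θ - 1) (-(1 + (θ - 1) * (p0 + p1))) (θ * p0 * p1) =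
      (1 + (θ - 1) * (p0 + p1)) ^ 2 - 4 * θ * (θ - 1) * p0 * p1 := by
    rw [discrim]; ring
  rw [← hD]
  refine discrim_pos_of_sign_change (x := p0) (y := 0) ?_ ?_
  · have q_at_p0 : (θ - 1) * (p0 * p0) + -(1 + (θ - 1) * (p0 + p1)) * p0 + θ * p0 * p1 =
        -(p0 * (1 - p1)) := by ring
    rw [q_at_p0, neg_neg_iff_pos]
    exact mul_pos hp0_pos (sub_pos.mpr hp1_lt_one)
  · simp only [mul_zero, add_zero]
    positivity

theorem delta_pos (p0 p1 θ : ℝ) (hp0 : p0 ∈ Set.Ioo (0:ℝ) 1) (hp1 : p1 ∈ Set.Ioo (0:ℝ) 1)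
    (hθ : 0 < θ) (hθ1 : θ ≠ 1) :
    0 < (1 + (θ - 1) * (p0 + p1)) ^ 2 - 4 * θ * (θ - 1) * p0 * p1 :=
  delta_pos_general p0 p1 θ hp0 hp1 hθ
end

section
/- Let p0, p1 ∈ (0,1) and θ > 0 with θ ≠ 1. Define δ = (1 + (θ-1)(p0+p1))² - 4θ(θ-1)p0p1 and e11 = (1 + (θ-1)(p0+p1) - √δ) / (2(θ-1)). Then max(0, p0 + p1 - 1) ≤ e11 ≤ min(p0, p1), i.e., e11 lies within the Fréchet–Hoeffding bounds for a joint probability with margins p0 and p1. -/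
/-!
`e11` is the root `(-b - √Δ) / (2a)` of `q x = a x² + b x + c` with `a = θ - 1`,
`b = -(1 + (θ - 1)(p0 + p1))`, `c = θ p0 p1`, i.e. of the odds-ratio equation
`q x = θ (p0 - x) (p1 - x) - x (1 - p0 - p1 + x) = 0`. At the lower Fréchet bound one of `x`,
`1 - p0 - p1 + x` vanishes, so `q ≥ 0`; at the upper bound one of `p0 - x`, `p1 - x` vanishes,
so `q ≤ 0`. Since `2 q x = (x - e11) (2 a x + b - √Δ)` and, as `θ > 0`, `2 a x + b < 0` between
the two bounds, the sign change of `q` pins `e11` between them, whatever the sign of `a`.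
-/

open Set

section Quadratic

variable {a b c x y : ℝ}

lemma discrim_nonneg_of_mul_quadratic_nonpos (h : a * (a * (x * x) + b * x + c) ≤ 0) :
    0 ≤ discrim a b c := by
  have h4 : discrim a b c = (2 * a * x + b) ^ 2 - 4 * (a * (a * (x * x) + b * x + c)) := by
    rw [discrim]; ring
  nlinarith [sq_nonneg (2 * a * x + b)]

lemma discrim_nonneg_of_quadratic_nonneg_of_nonpos (hx : 0 ≤ a * (x * x) + b * x + c)
    (hy : a * (y * y) + b * y + c ≤ 0) : 0 ≤ discrim a b c := by
  rcases le_total 0 a with ha | ha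
  · exact discrim_nonneg_of_mul_quadratic_nonpos (mul_nonpos_of_nonneg_of_nonpos ha hy)
  · exact discrim_nonneg_of_mul_quadratic_nonpos (mul_nonpos_of_nonpos_of_nonneg ha hx)

lemma two_mul_quadratic_eq_mul_sub_root (ha : a ≠ 0) (hd : 0 ≤ discrim a b c) :
    2 * (a * (x * x) + b * x + c) =
      (x - (-b - √(discrim a b c)) / (2 * a)) * (2 * a * x + b - √(discrim a b c)) := by
  have hs : √(discrim a b c) ^ 2 = b ^ 2 - 4 * a * c := by rw [Real.sq_sqrt hd, discrim]
  field_simp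
  linear_combination hs

lemma le_quadratic_root_of_nonneg (ha : a ≠ 0) (hd : 0 ≤ discrim a b c)
    (hx : 2 * a * x + b < √(discrim a b c)) (hq : 0 ≤ a * (x * x) + b * x + c) :
    x ≤ (-b - √(discrim a b c)) / (2 * a) := by
  have := two_mul_quadratic_eq_mul_sub_root (x := x) ha hd
  nlinarith

lemma quadratic_root_le_of_nonpos (ha : a ≠ 0) (hd : 0 ≤ discrim a b c)
    (hx : 2 * a * x + b < √(discrim a b c)) (hq : a * (x * x) + b * x + c ≤ 0) :
    (-b - √(discrim a b c)) / (2 * a) ≤ x := by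
  have := two_mul_quadratic_eq_mul_sub_root (x := x) ha hd
  nlinarith

end Quadratic

section FrechetBounds

variable {p0 p1 θ : ℝ}

lemma oddsRatio_quadratic_eq (x : ℝ) :
    (θ - 1) * (x * x) + -(1 + (θ - 1) * (p0 + p1)) * x + θ * p0 * p1 =
      θ * (p0 - x) * (p1 - x) - x * (1 - p0 - p1 + x) := by
  ring

lemma oddsRatio_quadratic_nonneg_at_lower (hp0 : p0 ∈ Icc 0 1) (hp1 : p1 ∈ Icc 0 1)
    (hθ : 0 ≤ θ) :
    0 ≤ (θ - 1) * (max 0 (p0 + p1 - 1) * max 0 (p0 + p1 - 1)) +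
      -(1 + (θ - 1) * (p0 + p1)) * max 0 (p0 + p1 - 1) + θ * p0 * p1 := by
  obtain ⟨h00, h01⟩ := hp0
  obtain ⟨h10, h11⟩ := hp1
  rw [oddsRatio_quadratic_eq]
  rcases le_total (p0 + p1 - 1) 0 with h | h
  · rw [max_eq_left h]; simp only [sub_zero, zero_mul]; positivity
  · rw [max_eq_right h]
    have : 0 ≤ θ * (p0 - (p0 + p1 - 1)) * (p1 - (p0 + p1 - 1)) := by
      apply mul_nonneg (mul_nonneg hθ _) _ <;> linarith
    nlinarith

lemma oddsRatio_quadratic_nonpos_at_upper (hp0 : p0 ∈ Icc 0 1) (hp1 : p1 ∈ Icc 0 1) :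
    (θ - 1) * (min p0 p1 * min p0 p1) + -(1 + (θ - 1) * (p0 + p1)) * min p0 p1 +
      θ * p0 * p1 ≤ 0 := by
  obtain ⟨h00, h01⟩ := hp0
  obtain ⟨h10, h11⟩ := hp1
  rw [oddsRatio_quadratic_eq]
  rcases le_total p0 p1 with h | h
  · rw [min_eq_left h]
    have : 0 ≤ p0 * (1 - p0 - p1 + p0) := mul_nonneg h00 (by linarith)
    nlinarith
  · rw [min_eq_right h]
    have : 0 ≤ p1 * (1 - p0 - p1 + p1) := mul_nonneg h10 (by linarith)
    nlinarith

lemma frechet_lower_le_upper (hp0 : p0 ∈ Icc 0 1) (hp1 : p1 ∈ Icc 0 1) :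
    max 0 (p0 + p1 - 1) ≤ min p0 p1 :=
  max_le (le_min hp0.1 hp1.1) (le_min (by linarith [hp1.2]) (by linarith [hp0.2]))

lemma oddsRatio_vertex_side {x : ℝ} (hθ : 0 < θ)
    (hx : x ∈ Icc (max 0 (p0 + p1 - 1)) (min p0 p1)) :
    2 * (θ - 1) * x + -(1 + (θ - 1) * (p0 + p1)) < 0 := by
  have hlo : p0 + p1 - 1 ≤ 2 * x := by
    linarith [hx.1, le_max_left 0 (p0 + p1 - 1), le_max_right 0 (p0 + p1 - 1)]
  have hhi : 2 * x ≤ p0 + p1 := by linarith [hx.2, min_le_left p0 p1, min_le_right p0 p1]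
  rcases le_total θ 1 with h | h
  · nlinarith [mul_nonneg_of_nonpos_of_nonpos (sub_nonpos.mpr h) (sub_nonpos.mpr hlo)]
  · nlinarith [mul_nonneg (sub_nonneg.mpr h) (sub_nonneg.mpr hhi)]

end FrechetBounds

theorem e11_frechet_bounds (p0 p1 θ : ℝ) (hp0 : p0 ∈ Set.Ioo (0:ℝ) 1)
    (hp1 : p1 ∈ Set.Ioo (0:ℝ) 1) (hθ : 0 < θ) (hθ1 : θ ≠ 1) :
    let δ := (1 + (θ - 1) * (p0 + p1)) ^ 2 - 4 * θ * (θ - 1) * p0 * p1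
    let e11 := (1 + (θ - 1) * (p0 + p1) - Real.sqrt δ) / (2 * (θ - 1))
    max 0 (p0 + p1 - 1) ≤ e11 ∧ e11 ≤ min p0 p1 := by
  intro δ e11
  have hp0' := Ioo_subset_Icc_self hp0
  have hp1' := Ioo_subset_Icc_self hp1
  set a := θ - 1
  set b := -(1 + (θ - 1) * (p0 + p1))
  have he11 : e11 = (-b - √(discrim a b (θ * p0 * p1))) / (2 * a) := by
    simp only [e11, δ, b, a, neg_neg, discrim]; congr 3; ring
  have ha : a ≠ 0 := sub_ne_zero.mpr hθ1
  have hlower := oddsRatio_quadratic_nonneg_at_lower hp0' hp1' hθ.le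
  have hupper := oddsRatio_quadratic_nonpos_at_upper (θ := θ) hp0' hp1'
  have hd := discrim_nonneg_of_quadratic_nonneg_of_nonpos hlower hupper
  have hLU := frechet_lower_le_upper hp0' hp1'
  have hside (x : ℝ) (hx : x ∈ Icc (max 0 (p0 + p1 - 1)) (min p0 p1)) :
      2 * a * x + b < √(discrim a b (θ * p0 * p1)) :=
    (oddsRatio_vertex_side hθ hx).trans_le (Real.sqrt_nonneg _)
  rw [he11]
  exact ⟨le_quadratic_root_of_nonneg ha hd (hside _ ⟨le_rfl, hLU⟩) hlower,
    quadratic_root_le_of_nonpos ha hd (hside _ ⟨hLU, le_rfl⟩) hupper⟩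
end

section
/- Let p0, p1 ∈ (0,1) with p0 ≠ p1, and define e11(θ) = (1 + (θ-1)(p0+p1) - √δ(θ)) / (2(θ-1)) for θ > 0, θ ≠ 1, with δ(θ) = (1 + (θ-1)(p0+p1))² - 4θ(θ-1)p0p1, and e11(1) = p0p1. Then θ ↦ e11(θ) is strictly increasing on (0, ∞). -/
lemma e11_aux_neg (a b t r : ℝ) (ha1 : 0 < a) (ha2 : a < 1) (hb1 : 0 < b) (hb2 : b < 1)
    (htm1 : -1 < t) (htneg : t < 0) (hr0 : 0 ≤ r)
    (hr2 : r ^ 2 = (1 + t * (a + b)) ^ 2 - 4 * (t + 1) * t * a * b) :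
    ∀ x : ℝ, x = (1 + t * (a + b) - r) / (2 * t) →
      a + b - 1 < x ∧ 0 < x ∧ x < a ∧ x < b ∧
        (t + 1) * ((a - x) * (b - x)) = x * (1 + x - (a + b)) := by
  intro x hx
  have h2t : 2 * t < 0 := by linarith
  have htn : 0 < -t := by linarith
  have htp1 : 0 < t + 1 := by linarith
  have h1a : 0 < 1 - a := by linarith
  have h1b : 0 < 1 - b := by linarith
  have hru : 1 + t * (a + b) < r := by
    nlinarith [mul_pos (mul_pos (mul_pos htn htp1) ha1) hb1]
  have hw0 : 0 < 1 + t * (b - a) := by nlinarith [mul_pos htn h1b]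
  have hv0 : 0 < 1 + t * (a - b) := by nlinarith [mul_pos htn h1a]
  have hrw : r < 1 + t * (b - a) := by
    nlinarith [mul_pos (mul_pos htn ha1) h1b]
  have hrv : r < 1 + t * (a - b) := by
    nlinarith [mul_pos (mul_pos htn hb1) h1a]
  have hrm : 1 + t * (2 - (a + b)) < r := by
    nlinarith [mul_pos (mul_pos (mul_pos htn htp1) h1a) h1b]
  have hX : 2 * t * x = 1 + t * (a + b) - r := by
    rw [hx, mul_comm]; exact div_mul_cancel₀ _ (ne_of_lt h2t)
  refine ⟨?_, ?_, ?_, ?_, ?_⟩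
  · nlinarith
  · nlinarith
  · nlinarith
  · nlinarith
  · have h4 : (4 * t) * ((t + 1) * ((a - x) * (b - x)) - x * (1 + x - (a + b))) = 0 := by
      linear_combination (2 * t * x - (1 + t * (a + b)) - r) * hX + hr2
    have h4t : (4 : ℝ) * t ≠ 0 := by intro h; nlinarith
    rcases mul_eq_zero.mp h4 with h | h
    · exact absurd h h4t
    · linarith

lemma e11_aux_pos (a b t r : ℝ) (ha1 : 0 < a) (ha2 : a < 1) (hb1 : 0 < b) (hb2 : b < 1)
    (htpos : 0 < t) (hr0 : 0 ≤ r)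
    (hr2 : r ^ 2 = (1 + t * (a + b)) ^ 2 - 4 * (t + 1) * t * a * b) :
    ∀ x : ℝ, x = (1 + t * (a + b) - r) / (2 * t) →
      a + b - 1 < x ∧ 0 < x ∧ x < a ∧ x < b ∧
        (t + 1) * ((a - x) * (b - x)) = x * (1 + x - (a + b)) := by
  intro x hx
  have h2t : 0 < 2 * t := by linarith
  have htp1 : 0 < t + 1 := by linarith
  have h1a : 0 < 1 - a := by linarith
  have h1b : 0 < 1 - b := by linarith
  have hu0 : 0 < 1 + t * (a + b) := by nlinarith [mul_pos htpos (add_pos ha1 hb1)]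
  have hm0 : 0 < 1 + t * (2 - (a + b)) := by nlinarith [mul_pos htpos (by linarith : (0:ℝ) < 2 - (a + b))]
  have hru : r < 1 + t * (a + b) := by
    nlinarith [mul_pos (mul_pos (mul_pos htpos htp1) ha1) hb1]
  have hrw : 1 + t * (b - a) < r := by
    nlinarith [mul_pos (mul_pos htpos ha1) h1b]
  have hrv : 1 + t * (a - b) < r := by
    nlinarith [mul_pos (mul_pos htpos hb1) h1a]
  have hrm : r < 1 + t * (2 - (a + b)) := by
    nlinarith [mul_pos (mul_pos (mul_pos htpos htp1) h1a) h1b]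
  have hX : 2 * t * x = 1 + t * (a + b) - r := by
    rw [hx, mul_comm]; exact div_mul_cancel₀ _ (ne_of_gt h2t)
  refine ⟨?_, ?_, ?_, ?_, ?_⟩
  · nlinarith
  · nlinarith
  · nlinarith
  · nlinarith
  · have h4 : (4 * t) * ((t + 1) * ((a - x) * (b - x)) - x * (1 + x - (a + b))) = 0 := by
      linear_combination (2 * t * x - (1 + t * (a + b)) - r) * hX + hr2
    have h4t : (4 : ℝ) * t ≠ 0 := by positivity
    rcases mul_eq_zero.mp h4 with h | h
    · exact absurd h h4t
    · linarith

lemma e11_key (a b θ : ℝ) (ha1 : 0 < a) (ha2 : a < 1) (hb1 : 0 < b) (hb2 : b < 1)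
    (hθ : 0 < θ) :
    ∀ x : ℝ,
      x = (if θ = 1 then a * b
        else
          (1 + (θ - 1) * (a + b) -
              Real.sqrt ((1 + (θ - 1) * (a + b)) ^ 2 - 4 * θ * (θ - 1) * a * b)) /
            (2 * (θ - 1))) →
      a + b - 1 < x ∧ 0 < x ∧ x < a ∧ x < b ∧
        θ * ((a - x) * (b - x)) = x * (1 + x - (a + b)) := by
  intro x hx
  by_cases h1 : θ = 1
  · rw [if_pos h1] at hx
    subst hx h1
    refine ⟨by nlinarith, by positivity, by nlinarith, by nlinarith, by ring⟩
  · rw [if_neg h1] at hx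
    have hθt : θ = (θ - 1) + 1 := by ring
    have hδeq : (1 + (θ - 1) * (a + b)) ^ 2 - 4 * θ * (θ - 1) * a * b
        = (1 + (θ - 1) * (a + b)) ^ 2 - 4 * ((θ - 1) + 1) * (θ - 1) * a * b := by ring
    rcases lt_or_gt_of_ne (sub_ne_zero.2 h1) with htneg | htpos
    · have hδ0 : 0 ≤ (1 + (θ - 1) * (a + b)) ^ 2 - 4 * θ * (θ - 1) * a * b := by
        nlinarith [sq_nonneg (1 + (θ - 1) * (a + b)),
          mul_pos (mul_pos (mul_pos (show (0:ℝ) < -(θ-1) by linarith) hθ) ha1) hb1]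
      have hr2 : (Real.sqrt ((1 + (θ - 1) * (a + b)) ^ 2 - 4 * θ * (θ - 1) * a * b)) ^ 2
          = (1 + (θ - 1) * (a + b)) ^ 2 - 4 * ((θ - 1) + 1) * (θ - 1) * a * b := by
        rw [Real.sq_sqrt hδ0]; ring
      have := e11_aux_neg a b (θ - 1)
        (Real.sqrt ((1 + (θ - 1) * (a + b)) ^ 2 - 4 * θ * (θ - 1) * a * b))
        ha1 ha2 hb1 hb2 (by linarith) htneg (Real.sqrt_nonneg _) hr2 x hx
      exact ⟨this.1, this.2.1, this.2.2.1, this.2.2.2.1, by rw [hθt]; exact this.2.2.2.2⟩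
    · have hδ0 : 0 ≤ (1 + (θ - 1) * (a + b)) ^ 2 - 4 * θ * (θ - 1) * a * b := by
        nlinarith [sq_nonneg (1 + (θ - 1) * (a - b)),
          mul_pos (mul_pos (show (0:ℝ) < θ - 1 by linarith) hb1) (show (0:ℝ) < 1 - a by linarith)]
      have hr2 : (Real.sqrt ((1 + (θ - 1) * (a + b)) ^ 2 - 4 * θ * (θ - 1) * a * b)) ^ 2
          = (1 + (θ - 1) * (a + b)) ^ 2 - 4 * ((θ - 1) + 1) * (θ - 1) * a * b := by
        rw [Real.sq_sqrt hδ0]; ring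
      have := e11_aux_pos a b (θ - 1)
        (Real.sqrt ((1 + (θ - 1) * (a + b)) ^ 2 - 4 * θ * (θ - 1) * a * b))
        ha1 ha2 hb1 hb2 htpos (Real.sqrt_nonneg _) hr2 x hx
      exact ⟨this.1, this.2.1, this.2.2.1, this.2.2.2.1, by rw [hθt]; exact this.2.2.2.2⟩

theorem e11_strictMonoOn (p0 p1 : ℝ) (hp0 : p0 ∈ Set.Ioo (0:ℝ) 1)
    (hp1 : p1 ∈ Set.Ioo (0:ℝ) 1) (hne : p0 ≠ p1) :
    StrictMonoOn
      (fun θ : ℝ =>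
        if θ = 1 then p0 * p1
        else
          (1 + (θ - 1) * (p0 + p1) -
              Real.sqrt ((1 + (θ - 1) * (p0 + p1)) ^ 2 - 4 * θ * (θ - 1) * p0 * p1)) /
            (2 * (θ - 1)))
      (Set.Ioi 0) := by
  obtain ⟨ha1, ha2⟩ := hp0
  obtain ⟨hb1, hb2⟩ := hp1
  intro θ1 hθ1 θ2 hθ2 hlt
  simp only [Set.mem_Ioi] at hθ1 hθ2
  obtain ⟨x, hxeq⟩ : ∃ x : ℝ, x = (if θ1 = 1 then p0 * p1
        else
          (1 + (θ1 - 1) * (p0 + p1) -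
              Real.sqrt ((1 + (θ1 - 1) * (p0 + p1)) ^ 2 - 4 * θ1 * (θ1 - 1) * p0 * p1)) /
            (2 * (θ1 - 1))) := ⟨_, rfl⟩
  obtain ⟨y, hyeq⟩ : ∃ y : ℝ, y = (if θ2 = 1 then p0 * p1
        else
          (1 + (θ2 - 1) * (p0 + p1) -
              Real.sqrt ((1 + (θ2 - 1) * (p0 + p1)) ^ 2 - 4 * θ2 * (θ2 - 1) * p0 * p1)) /
            (2 * (θ2 - 1))) := ⟨_, rfl⟩
  obtain ⟨hL1, h01, hxa, hxb, heq1⟩ := e11_key p0 p1 θ1 ha1 ha2 hb1 hb2 hθ1 x hxeq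
  obtain ⟨hL2, h02, hya, hyb, heq2⟩ := e11_key p0 p1 θ2 ha1 ha2 hb1 hb2 hθ2 y hyeq
  show (if θ1 = 1 then p0 * p1
        else
          (1 + (θ1 - 1) * (p0 + p1) -
              Real.sqrt ((1 + (θ1 - 1) * (p0 + p1)) ^ 2 - 4 * θ1 * (θ1 - 1) * p0 * p1)) /
            (2 * (θ1 - 1)))
      < (if θ2 = 1 then p0 * p1
        else
          (1 + (θ2 - 1) * (p0 + p1) -
              Real.sqrt ((1 + (θ2 - 1) * (p0 + p1)) ^ 2 - 4 * θ2 * (θ2 - 1) * p0 * p1)) /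
            (2 * (θ2 - 1)))
  rw [← hxeq, ← hyeq]
  by_contra hcon
  push_neg at hcon
  have hh : 0 < p0 * p1 * (1 - (p0 + p1) + x + y) - x * y := by
    rcases le_or_gt x (p0 * p1) with hc | hc
    · nlinarith [mul_nonneg h02.le (sub_nonneg.2 hc),
        mul_pos (mul_pos ha1 hb1) (show (0:ℝ) < 1 - (p0 + p1) + x by linarith)]
    · nlinarith [mul_pos (sub_pos.2 hyb) (sub_pos.2 hc),
        mul_pos (mul_pos hb1 (show (0:ℝ) < 1 - p0 by linarith)) (sub_pos.2 hxa)]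
  have hP : 0 < ((p0 - x) * (p1 - x)) * ((p0 - y) * (p1 - y)) :=
    mul_pos (mul_pos (sub_pos.2 hxa) (sub_pos.2 hxb))
      (mul_pos (sub_pos.2 hya) (sub_pos.2 hyb))
  have hkey : θ1 * (((p0 - x) * (p1 - x)) * ((p0 - y) * (p1 - y)))
      - θ2 * (((p0 - x) * (p1 - x)) * ((p0 - y) * (p1 - y)))
      = (x - y) * (p0 * p1 * (1 - (p0 + p1) + x + y) - x * y) := by
    linear_combination ((p0 - y) * (p1 - y)) * heq1 - ((p0 - x) * (p1 - x)) * heq2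
  have hge : 0 ≤ (x - y) * (p0 * p1 * (1 - (p0 + p1) + x + y) - x * y) :=
    mul_nonneg (sub_nonneg.2 hcon) hh.le
  have h1 : θ2 * (((p0 - x) * (p1 - x)) * ((p0 - y) * (p1 - y)))
      ≤ θ1 * (((p0 - x) * (p1 - x)) * ((p0 - y) * (p1 - y))) := by linarith
  have h2 : θ2 ≤ θ1 := le_of_mul_le_mul_right h1 hP
  linarith
end
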